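/- Let W be a closed linear sublattice of ℓᵖ(X, w) containing the constant function 1, where X is countable, w is a summable positive weight, and 1 ≤ p < ∞. Define x ∼ y iff f(x) = f(y) for all f ∈ W. Then for every equivalence class E of ∼, the characteristic function χ_E belongs to W. -/

import Mathlib

/-!
Every singleton has positive mass, so elements of `Lᵖ` are genuine functions and the lattice
operations act pointwise. Let `E` be the class of `a`. For `y ∉ E` some `f ∈ W` has
`f y ≠ f a`, and `(1 - |f - f a| / |f y - f a|)⁺ ∈ W` is a bump with values in `[0, 1]`,
equal to `1` on `E` and vanishing at `y`. Enumerating `X`, the finite infima of these bumps lie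
in `W`, are bounded by `1` and converge pointwise to `χ_E`; the measure being finite, they
converge in `Lᵖ`, and `W` is closed.
-/

open MeasureTheory Filter Topology
open scoped ENNReal NNReal

namespace MeasureTheory

variable {α : Type*} [MeasurableSpace α] {μ : Measure α}

theorem isFiniteMeasure_of_tsum_measure_singleton_ne_top [Countable α]
    (h : ∑' x, μ {x} ≠ ∞) : IsFiniteMeasure μ :=
  ⟨(Set.iUnion_of_singleton α ▸ measure_iUnion_le _).trans_lt h.lt_top⟩

theorem unifIntegrable_of_norm_le {ι β : Type*} [NormedAddCommGroup β] {p : ℝ≥0∞} (hp : 1 ≤ p)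
    (hp' : p ≠ ∞) {f : ι → α → β} (hf : ∀ i, AEStronglyMeasurable (f i) μ) {M : ℝ≥0}
    (hM : ∀ i x, ‖f i x‖₊ ≤ M) : UnifIntegrable f p μ := by
  refine unifIntegrable_of hp hp' hf fun ε hε => ⟨M + 1, fun i => ?_⟩
  have hempty : {x | M + 1 ≤ ‖f i x‖₊} = ∅ :=
    Set.eq_empty_of_forall_notMem fun x hx => (hM i x).not_gt (lt_of_lt_of_le (by simp) hx)
  simp [hempty]

section PositiveAtoms

variable [Countable α] (hμ : ∀ x, μ {x} ≠ 0)
include hμ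

theorem ae_iff_forall_of_measure_singleton_ne_zero {P : α → Prop} :
    (∀ᵐ x ∂μ, P x) ↔ ∀ x, P x := by
  simp [ae_iff_of_countable, hμ]

theorem ae_eq_iff_eq_of_measure_singleton_ne_zero {β : Type*} {f g : α → β} :
    f =ᵐ[μ] g ↔ f = g :=
  (ae_iff_forall_of_measure_singleton_ne_zero hμ).trans funext_iff.symm

variable {p : ℝ≥0∞}

section Lattice

variable {E : Type*} [NormedAddCommGroup E] [Lattice E] [HasSolidNorm E] [IsOrderedAddMonoid E]

noncomputable def Lp.coeFnLatticeHom : LatticeHom (Lp E p μ) (α → E) where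
  toFun f := f
  map_sup' f g := (ae_eq_iff_eq_of_measure_singleton_ne_zero hμ).1 (Lp.coeFn_sup f g)
  map_inf' f g := (ae_eq_iff_eq_of_measure_singleton_ne_zero hμ).1 (Lp.coeFn_inf f g)

theorem Lp.coeFn_finset_inf' {ι : Type*} {s : Finset ι} (hs : s.Nonempty) (f : ι → Lp E p μ)
    (x : α) : s.inf' hs f x = s.inf' hs fun i => f i x := by
  rw [← Finset.inf'_apply]
  exact congrFun (map_finset_inf' (Lp.coeFnLatticeHom hμ) hs f) x

end Lattice

theorem Lp.exists_mem_bump_of_apply_ne {W : Submodule ℝ (Lp ℝ p μ)}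
    (hsup : ∀ f ∈ W, ∀ g ∈ W, f ⊔ g ∈ W) {one : Lp ℝ p μ} (hone : ⇑one = 1) (hone' : one ∈ W)
    {f : Lp ℝ p μ} (hf : f ∈ W) {a y : α} (hy : f y ≠ f a) :
    ∃ g ∈ W, (∀ x, g x ∈ Set.Icc (0 : ℝ) 1) ∧ (∀ x, f x = f a → g x = 1) ∧ g y = 0 := by
  set t := |f y - f a|
  have ht : 0 < t := abs_pos.2 (sub_ne_zero.2 hy)
  set h := f - f a • one
  have hh : h ∈ W := W.sub_mem hf (W.smul_mem _ hone')
  have habs : |h| ∈ W := hsup _ hh _ (W.neg_mem hh)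
  refine ⟨(one - t⁻¹ • |h|) ⊔ 0, hsup _ (W.sub_mem hone' (W.smul_mem _ habs)) _ W.zero_mem, ?_⟩
  have hval : ∀ x, ((one - t⁻¹ • |h|) ⊔ 0 : Lp ℝ p μ) x = max (1 - t⁻¹ * |f x - f a|) 0 := by
    refine (ae_iff_forall_of_measure_singleton_ne_zero hμ).1 ?_
    filter_upwards [Lp.coeFn_sup (one - t⁻¹ • |h|) 0, Lp.coeFn_sub one (t⁻¹ • |h|),
      Lp.coeFn_smul t⁻¹ |h|, Lp.coeFn_abs h, Lp.coeFn_sub f (f a • one), Lp.coeFn_smul (f a) one,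
      Lp.coeFn_zero ℝ p μ] with x h₁ h₂ h₃ h₄ h₅ h₆ h₇
    rw [h₁, Pi.sup_apply, h₂, Pi.sub_apply, h₃, Pi.smul_apply, h₄, h₅, Pi.sub_apply, h₆,
      Pi.smul_apply, h₇, hone]
    simp
  refine ⟨fun x => ⟨?_, ?_⟩, fun x hx => ?_, ?_⟩ <;> rw [hval]
  · exact le_max_right _ _
  · exact max_le (by linarith [show 0 ≤ t⁻¹ * |f x - f a| by positivity]) zero_le_one
  · simp [hx]
  · simp [t, ht.ne']

theorem Lp.exists_mem_ae_eq_indicator_of_bumps [MeasurableSingletonClass α] [IsFiniteMeasure μ]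
    [Nonempty α] [Fact (1 ≤ p)] (hp : p ≠ ∞) {W : Set (Lp ℝ p μ)} (hW : IsClosed W)
    (hinf : ∀ f ∈ W, ∀ g ∈ W, f ⊓ g ∈ W) {E : Set α} (g : α → Lp ℝ p μ) (hgW : ∀ y, g y ∈ W)
    (hg : ∀ y x, g y x ∈ Set.Icc (0 : ℝ) 1) (hgE : ∀ y, ∀ x ∈ E, g y x = 1)
    (hgy : ∀ y ∉ E, g y y = 0) :
    ∃ χ ∈ W, ⇑χ =ᵐ[μ] E.indicator fun _ => (1 : ℝ) := by
  obtain ⟨u, hu⟩ := exists_surjective_nat α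
  have hne (n : ℕ) : (Finset.range (n + 1)).Nonempty := Finset.nonempty_range_add_one
  set G : ℕ → Lp ℝ p μ := fun n => (Finset.range (n + 1)).inf' (hne n) (g ∘ u)
  have hGW : ∀ n, G n ∈ W := fun n => Finset.inf'_induction _ _ hinf fun m _ => hgW (u m)
  have hG : ∀ n x, G n x = (Finset.range (n + 1)).inf' (hne n) fun m => g (u m) x :=
    fun n x => Lp.coeFn_finset_inf' hμ _ _ x
  have hG0 : ∀ n x, 0 ≤ G n x := fun n x => by
    rw [hG]
    exact Finset.le_inf' _ _ fun m _ => (hg _ x).1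
  have hG1 : ∀ n x, G n x ≤ 1 := fun n x => by
    rw [hG]
    exact Finset.inf'_le_of_le _ (Finset.self_mem_range_succ n) (hg _ x).2
  have hlim : ∀ x, Tendsto (fun n => G n x) atTop (𝓝 (E.indicator (fun _ => (1 : ℝ)) x)) := by
    intro x
    by_cases hx : x ∈ E
    · simp_rw [hG, Set.indicator_of_mem hx, hgE _ x hx, Finset.inf'_const]
      exact tendsto_const_nhds
    · obtain ⟨m, rfl⟩ := hu x
      rw [Set.indicator_of_notMem hx]
      refine tendsto_const_nhds.congr' (eventually_atTop.2 ⟨m, fun n hmn => ?_⟩)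
      refine (le_antisymm ?_ (hG0 n _)).symm
      rw [hG]
      exact Finset.inf'_le_of_le _ (Finset.mem_range.2 (by omega)) (hgy _ hx).le
  have hχ : MemLp (E.indicator fun _ => (1 : ℝ)) p μ :=
    memLp_indicator_const p E.to_countable.measurableSet 1 (Or.inr (measure_ne_top μ E))
  have hbound : ∀ n x, ‖G n x‖₊ ≤ 1 := fun n x => by
    rw [← NNReal.coe_le_coe, coe_nnnorm, Real.norm_of_nonneg (hG0 n x)]
    exact hG1 n x
  have hGχ : Tendsto G atTop (𝓝 (hχ.toLp _)) :=
    Lp.tendsto_Lp_of_tendsto_eLpNorm _ hχ <| tendsto_Lp_finite_of_tendsto_ae Fact.out hp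
      (fun n => Lp.aestronglyMeasurable (G n)) hχ
      (unifIntegrable_of_norm_le Fact.out hp (fun n => Lp.aestronglyMeasurable (G n)) hbound)
      (ae_of_all _ hlim)
  exact ⟨hχ.toLp _, hW.mem_of_tendsto hGχ (Eventually.of_forall hGW), hχ.coeFn_toLp⟩

end PositiveAtoms

end MeasureTheory

theorem indicator_of_class_mem
    {X : Type*} [Countable X] [MeasurableSpace X] [MeasurableSingletonClass X]
    (w : X → ℝ) (hw : ∀ x, 0 < w x) (hsum : Summable w)
    (μ : Measure X) (hμ : ∀ x, μ {x} = ENNReal.ofReal (w x))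
    (p : ENNReal) [Fact (1 ≤ p)] (hp : p ≠ ⊤)
    (W : Submodule ℝ (Lp ℝ p μ)) (hclosed : IsClosed (W : Set (Lp ℝ p μ)))
    (hlat : ∀ f ∈ W, ∀ g ∈ W, f ⊔ g ∈ W ∧ f ⊓ g ∈ W)
    (one : Lp ℝ p μ) (hone : ∀ᵐ x ∂μ, one x = 1) (hone' : one ∈ W)
    (a : X) :
    ∃ χ ∈ W, ⇑χ =ᵐ[μ] Set.indicator {x | ∀ f ∈ W, f x = f a} (fun _ => (1 : ℝ)) := by
  have hpos : ∀ x, μ {x} ≠ 0 := fun x => by simpa [hμ] using hw x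
  have : IsFiniteMeasure μ := isFiniteMeasure_of_tsum_measure_singleton_ne_top <| by
    simp_rw [hμ, ← ENNReal.ofReal_tsum_of_nonneg (fun x => (hw x).le) hsum]
    exact ENNReal.ofReal_ne_top
  have : Nonempty X := ⟨a⟩
  have hone₁ : ⇑one = 1 := (ae_eq_iff_eq_of_measure_singleton_ne_zero hpos).1 hone
  set E := {x | ∀ f ∈ W, f x = f a}
  have hbump : ∀ y, ∃ g ∈ W,
      (∀ x, g x ∈ Set.Icc (0 : ℝ) 1) ∧ (∀ x ∈ E, g x = 1) ∧ (y ∉ E → g y = 0) := by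
    intro y
    by_cases hy : y ∈ E
    · exact ⟨one, hone', fun x => by simp [hone₁], fun x _ => by simp [hone₁], absurd hy⟩
    obtain ⟨f, hf, hfy⟩ : ∃ f ∈ W, f y ≠ f a := by simpa [E] using hy
    obtain ⟨g, hg, hg01, hgE, hgy⟩ := Lp.exists_mem_bump_of_apply_ne hpos
      (fun f hf g hg => (hlat f hf g hg).1) hone₁ hone' hf hfy
    exact ⟨g, hg, hg01, fun x hx => hgE x (hx f hf), fun _ => hgy⟩
  choose g hgW hg01 hgE hgy using hbump
  exact Lp.exists_mem_ae_eq_indicator_of_bumps hpos hp hclosed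
    (fun f hf g hg => (hlat f hf g hg).2) g hgW hg01 hgE hgy
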